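/- arXiv:1401.6090 — 3 statements merged into one kernel-verified Lean document; each statement's English description precedes it below -/
import Mathlib

section
/- Let θ ∈ (0,1) and let A, B ∈ Mₙ(ℂ) be positive definite Hermitian matrices such that for all M₀, M₁ > 0 and all T ∈ Mₙ(ℂ), the conditions TᴴT ≤ M₀·I and TᴴAT ≤ M₁·A imply TᴴBT ≤ M₀^{1−θ}·M₁^{θ}·B. Then there exists a constant C > 0 such that B = C·A^{θ}, where A^{θ} is the θ-th power of A defined by the functional calculus. -/
/-!
Conjugating by the eigenvector unitary of `A` (which preserves the hypothesis) reduces to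
`A = diag d` with `d > 0`. The reflections `diag (±1)` are unitaries fixing `A`; applying the
hypothesis with `M₀ = M₁ = 1` to such a unitary and to its inverse shows that they also fix `B`,
so `B` is diagonal, `B = diag b`. The matrix unit `T = E_{ji}` satisfies `TᴴT ≤ 1` and
`Tᴴ A T = d_j E_{ii} ≤ (d_j / d_i) A`, hence `b_j ≤ (d_j / d_i)^θ b_i`. Together with the same
inequality for `i` and `j` exchanged, `b_k / d_k^θ` is constant.
-/

open Matrix MeasureTheory
open scoped ComplexOrder

/-- Loewner order on complex `n × n` matrices: `LoewnerLE A B` iff `B - A` is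
positive semidefinite (i.e. `A ≤ B`). -/
def LoewnerLE {n : ℕ} (A B : Matrix (Fin n) (Fin n) ℂ) : Prop := (B - A).PosSemidef

/-- Functional calculus for Hermitian matrices: apply `h : ℝ → ℝ` to each eigenvalue
in a spectral decomposition of `A` (junk value `0` for non-Hermitian input). -/
noncomputable def matFunCalc {n : ℕ} (h : ℝ → ℝ) (A : Matrix (Fin n) (Fin n) ℂ) :
    Matrix (Fin n) (Fin n) ℂ :=
  if hA : A.IsHermitian then
    (hA.eigenvectorUnitary : Matrix (Fin n) (Fin n) ℂ) *
      diagonal (fun i => (h (hA.eigenvalues i) : ℂ)) *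
      star (hA.eigenvectorUnitary : Matrix (Fin n) (Fin n) ℂ)
  else 0

open scoped MatrixOrder

theorem Matrix.diagonal_le_diagonal {ι : Type*} [Fintype ι] [DecidableEq ι] {x y : ι → ℂ}
    (h : x ≤ y) : diagonal x ≤ diagonal y := by
  rw [le_iff, diagonal_sub, posSemidef_diagonal_iff]
  exact fun k => sub_nonneg.2 (h k)

theorem exists_pos_eq_mul_of_le_div_mul {ι : Type*} {f g : ι → ℝ} (hf : ∀ k, 0 < f k)
    (hg : ∀ k, 0 < g k) (h : ∀ i j, f j ≤ g j / g i * f i) : ∃ C, 0 < C ∧ ∀ k, f k = C * g k := by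
  rcases isEmpty_or_nonempty ι with hι | ⟨⟨i⟩⟩
  · exact ⟨1, one_pos, isEmptyElim⟩
  refine ⟨f i / g i, div_pos (hf i) (hg i), fun k => le_antisymm ?_ ?_⟩
  · calc f k ≤ g k / g i * f i := h i k
      _ = f i / g i * g k := by ring
  · have hik := h k i
    rw [div_mul_eq_mul_div, le_div_iff₀ (hg k)] at hik
    rw [div_mul_eq_mul_div, div_le_iff₀ (hg i)]
    linarith

section

variable {ι : Type*} [Fintype ι] [DecidableEq ι]

def IsExactInterpolation (θ : ℝ) (A B : Matrix ι ι ℂ) : Prop :=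
  ∀ M₀ M₁ : ℝ, 0 < M₀ → 0 < M₁ → ∀ T : Matrix ι ι ℂ,
    Tᴴ * T ≤ M₀ • 1 → Tᴴ * A * T ≤ M₁ • A → Tᴴ * B * T ≤ (M₀ ^ (1 - θ) * M₁ ^ θ) • B

namespace IsExactInterpolation

variable {θ : ℝ} {A B : Matrix ι ι ℂ}

theorem map (h : IsExactInterpolation θ A B) (φ : Matrix ι ι ℂ ≃⋆ₐ[ℝ] Matrix ι ι ℂ) :
    IsExactInterpolation θ (φ A) (φ B) := by
  intro M₀ M₁ hM₀ hM₁ T hT hTA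
  have key := h M₀ M₁ hM₀ hM₁ (φ.symm T)
    (by simpa [← star_eq_conjTranspose, ← map_star] using (map_le_map_iff φ.symm).2 hT)
    (by simpa [← star_eq_conjTranspose, ← map_star] using (map_le_map_iff φ.symm).2 hTA)
  simpa [← star_eq_conjTranspose, ← map_star] using (map_le_map_iff φ).2 key

theorem conj_le_of_mem_unitaryGroup (h : IsExactInterpolation θ A B) {T : Matrix ι ι ℂ}
    (hT : T ∈ unitaryGroup ι ℂ) (hTA : Tᴴ * A * T = A) : Tᴴ * B * T ≤ B := by
  have hTT : Tᴴ * T = 1 := mem_unitaryGroup_iff'.mp hT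
  simpa using h 1 1 one_pos one_pos T (by simp [hTT]) (by simp [hTA])

theorem conj_eq_of_mem_unitaryGroup (h : IsExactInterpolation θ A B) {T : Matrix ι ι ℂ}
    (hT : T ∈ unitaryGroup ι ℂ) (hTA : Tᴴ * A * T = A) : Tᴴ * B * T = B := by
  have hTT : Tᴴ * T = 1 := mem_unitaryGroup_iff'.mp hT
  have hTT' : T * Tᴴ = 1 := mem_unitaryGroup_iff.mp hT
  have hTA' : Tᴴᴴ * A * Tᴴ = A := calc
    Tᴴᴴ * A * Tᴴ = T * (Tᴴ * A * T) * Tᴴ := by rw [conjTranspose_conjTranspose, hTA]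
    _ = (T * Tᴴ) * A * (T * Tᴴ) := by noncomm_ring
    _ = A := by simp [hTT']
  have hTB' := h.conj_le_of_mem_unitaryGroup (T := Tᴴ) (Unitary.star_mem hT) hTA'
  rw [conjTranspose_conjTranspose] at hTB'
  refine le_antisymm (h.conj_le_of_mem_unitaryGroup hT hTA) ?_
  calc B = (Tᴴ * T) * B * (Tᴴ * T) := by simp [hTT]
    _ = star T * (T * B * Tᴴ) * T := by rw [star_eq_conjTranspose]; noncomm_ring
    _ ≤ star T * B * T := star_left_conjugate_le_conjugate hTB' T

theorem apply_eq_zero_of_diagonal {d : ι → ℂ} (h : IsExactInterpolation θ (diagonal d) B)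
    {i j : ι} (hij : i ≠ j) : B i j = 0 := by
  set S : Matrix ι ι ℂ := diagonal fun k => if k = i then -1 else 1
  have hS : Sᴴ = S := by
    rw [diagonal_conjTranspose]
    congr 1
    ext k
    by_cases hk : k = i <;> simp [hk]
  have hSS : S * S = 1 := by
    rw [diagonal_mul_diagonal, ← diagonal_one]
    congr 1
    ext k
    split_ifs <;> simp
  have hSd : Sᴴ * diagonal d * S = diagonal d := by
    rw [hS, diagonal_mul_diagonal, diagonal_mul_diagonal]
    congr 1
    ext k
    split_ifs <;> simp
  have hSU : S ∈ unitaryGroup ι ℂ := by rw [mem_unitaryGroup_iff', star_eq_conjTranspose, hS, hSS]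
  have hSBS := congrFun (congrFun (h.conj_eq_of_mem_unitaryGroup hSU hSd) i) j
  simp only [hS, S, mul_diagonal, diagonal_mul, if_pos, if_neg hij.symm] at hSBS
  linear_combination -hSBS / 2

theorem apply_le_of_diagonal {d : ι → ℝ} (hd : ∀ k, 0 < d k)
    (h : IsExactInterpolation θ (diagonal fun k => (d k : ℂ)) B) (i j : ι) :
    B j j ≤ ((d j / d i) ^ θ : ℝ) * B i i := by
  set T : Matrix ι ι ℂ := single j i 1
  have hT : Tᴴ * T ≤ (1 : ℝ) • 1 := by
    rw [one_smul, conjTranspose_single, single_mul_single_same, ← diagonal_single, ← diagonal_one]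
    refine diagonal_le_diagonal fun k => ?_
    by_cases hk : k = i <;> simp [hk]
  have hTA : Tᴴ * diagonal (fun k => (d k : ℂ)) * T ≤
      (d j / d i) • diagonal fun k => (d k : ℂ) := by
    rw [conjTranspose_single, single_mul_mul_single, ← diagonal_single, ← diagonal_smul]
    refine diagonal_le_diagonal fun k => ?_
    rcases eq_or_ne k i with rfl | hk
    · simp [(hd k).ne']
    · simp only [Pi.single_eq_of_ne hk, Pi.smul_apply, Complex.real_smul]
      exact_mod_cast (mul_pos (div_pos (hd j) (hd i)) (hd k)).le
  have hTB := le_iff.1 (h 1 _ one_pos (div_pos (hd j) (hd i)) T hT hTA)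
  rw [conjTranspose_single, single_mul_mul_single, Real.one_rpow, one_mul] at hTB
  simpa [sub_nonneg] using hTB.diag_nonneg (i := i)

theorem eq_smul_diagonal_rpow {d : ι → ℝ} (hd : ∀ k, 0 < d k) (hB : B.PosDef)
    (h : IsExactInterpolation θ (diagonal fun k => (d k : ℂ)) B) :
    ∃ C : ℝ, 0 < C ∧ B = C • diagonal fun k => ((d k ^ θ : ℝ) : ℂ) := by
  obtain ⟨C, hC, hBC⟩ := exists_pos_eq_mul_of_le_div_mul (f := fun k => (B k k).re)
    (fun k => by simpa using (Complex.lt_def.1 (hB.diag_pos (i := k))).1)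
    (fun k => Real.rpow_pos_of_pos (hd k) θ)
    (fun i j => by
      rw [← Real.div_rpow (hd j).le (hd i).le]
      simpa using (Complex.le_def.1 (h.apply_le_of_diagonal hd i j)).1)
  refine ⟨C, hC, ?_⟩
  ext i j
  rcases eq_or_ne i j with rfl | hij
  · rw [← hB.isHermitian.coe_re_apply_self]
    simp [hBC]
  · simp [h.apply_eq_zero_of_diagonal hij, hij]

end IsExactInterpolation

end

theorem geometric_interpolation_general (n : ℕ) (θ : ℝ)
    (A B : Matrix (Fin n) (Fin n) ℂ) (hA : A.PosDef) (hB : B.PosDef)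
    (htype : ∀ M₀ M₁ : ℝ, 0 < M₀ → 0 < M₁ → ∀ T : Matrix (Fin n) (Fin n) ℂ,
      LoewnerLE (Tᴴ * T) (M₀ • (1 : Matrix (Fin n) (Fin n) ℂ)) →
      LoewnerLE (Tᴴ * A * T) (M₁ • A) →
      LoewnerLE (Tᴴ * B * T) ((M₀ ^ (1 - θ) * M₁ ^ θ) • B)) :
    ∃ C : ℝ, 0 < C ∧ B = C • matFunCalc (fun l => l ^ θ) A := by
  have hAH := hA.isHermitian
  set U := hAH.eigenvectorUnitary
  set φ := Unitary.conjStarAlgAut ℝ (Matrix (Fin n) (Fin n) ℂ) U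
  have hAφ : φ.symm A = diagonal fun k => (hAH.eigenvalues k : ℂ) := by
    rw [φ.symm_apply_eq]
    exact hAH.spectral_theorem
  have hBφ : (φ.symm B).PosDef :=
    Unitary.isUnit_coe.posDef_star_left_conjugate_iff.2 hB
  have h : IsExactInterpolation θ (φ.symm A) (φ.symm B) := IsExactInterpolation.map htype φ.symm
  rw [hAφ] at h
  obtain ⟨C, hC, hBC⟩ := h.eq_smul_diagonal_rpow hA.eigenvalues_pos hBφ
  refine ⟨C, hC, ?_⟩
  rw [φ.symm_apply_eq, map_smul] at hBC
  rw [hBC, matFunCalc, dif_pos hAH, Unitary.conjStarAlgAut_apply]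

/-- McCarthy/Uhlmann, matrix case: if `B` determines an exact
interpolation space of exponent `θ` relative to the couple determined by `A`,
then `B = C·A^θ` for some constant `C > 0`. -/
theorem geometric_interpolation (n : ℕ) (θ : ℝ) (hθ : θ ∈ Set.Ioo (0 : ℝ) 1)
    (A B : Matrix (Fin n) (Fin n) ℂ) (hA : A.PosDef) (hB : B.PosDef)
    (htype : ∀ M₀ M₁ : ℝ, 0 < M₀ → 0 < M₁ → ∀ T : Matrix (Fin n) (Fin n) ℂ,
      LoewnerLE (Tᴴ * T) (M₀ • (1 : Matrix (Fin n) (Fin n) ℂ)) →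
      LoewnerLE (Tᴴ * A * T) (M₁ • A) →
      LoewnerLE (Tᴴ * B * T) ((M₀ ^ (1 - θ) * M₁ ^ θ) • B)) :
    ∃ C : ℝ, 0 < C ∧ B = C • matFunCalc (fun l => l ^ θ) A :=
  geometric_interpolation_general n θ A B hA hB htype
end

section
/- Let h be a strictly positive function of class P′ and define 𝐇(t) = sup_{s>0} h(st)/h(s) for t > 0 (which is finite since h(st)/h(s) ≤ max{1,t}). Then for every n, every positive definite Hermitian A ∈ Mₙ(ℂ), every T ∈ Mₙ(ℂ), and all M₀, M₁ > 0: the conditions TᴴT ≤ M₀·I and TᴴAT ≤ M₁·A imply Tᴴh(A)T ≤ M₀·𝐇(M₁/M₀)·h(A). -/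
open Matrix MeasureTheory
open scoped ComplexOrder

/-- A function is of class `P'` (positive Pick functions regular on `(0,∞)`) if
`h(λ) = c + ∫_{[0,∞)} (1+t)λ/(1+tλ) dρ(t)` on `(0,∞)` for some constant `c ≥ 0`
and finite positive Borel measure `ρ` on `[0,∞)`. -/
def IsPickPos (h : ℝ → ℝ) : Prop :=
  ∃ c : ℝ, 0 ≤ c ∧ ∃ ρ : Measure ℝ, IsFiniteMeasure ρ ∧
    ∀ l : ℝ, 0 < l →
      h l = c + ∫ t in Set.Ici (0 : ℝ), ((1 + t) * l) / (1 + t * l) ∂ρ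

/-!
Write `h(λ) = c + ∫ g_t(λ) dρ(t)` with `g_t(λ) = (1+t)λ/(1+tλ)` and put `r = M₁/M₀`. It suffices
to show `Tᴴ g_t(A) T ≤ M₀ g_t(rA)` for every `t ≥ 0` (the constant term is handled by
`TᴴT ≤ M₀`): integrating gives `Tᴴ h(A) T ≤ M₀ h(rA)`, and `h(rλ) ≤ 𝐇(r) h(λ)` eigenvalue by
eigenvalue finishes. Up to the factor `1+t`, `g_t(A)` is the parallel sum of `A` and `t⁻¹`, whose
quadratic form at `x` is the infimum of `⟨u, Au⟩ + t⁻¹‖v‖²` over `x = u + v`. Taking the optimal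
splitting of `x` for `rA` and pushing it through `T`, the two hypotheses bound the two terms
separately. Everything is computed in an eigenbasis of `A`.
-/

noncomputable def pickKernel (t l : ℝ) : ℝ := (1 + t) * l / (1 + t * l)

lemma pickKernel_nonneg {t l : ℝ} (ht : 0 ≤ t) (hl : 0 ≤ l) : 0 ≤ pickKernel t l := by
  unfold pickKernel; positivity

lemma pickKernel_le_max_one {t l : ℝ} (ht : 0 ≤ t) (hl : 0 ≤ l) :
    pickKernel t l ≤ max 1 l := by
  rw [pickKernel, div_le_iff₀ (by positivity)]
  rcases le_total l 1 with hl1 | hl1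
  · rw [max_eq_left hl1]; nlinarith [mul_nonneg ht hl]
  · rw [max_eq_right hl1]; nlinarith [mul_nonneg (mul_nonneg ht hl) (sub_nonneg.2 hl1)]

lemma pickKernel_mul_le_max_one_mul {t s r : ℝ} (ht : 0 ≤ t) (hs : 0 ≤ s) (hr : 0 ≤ r) :
    pickKernel t (s * r) ≤ max 1 r * pickKernel t s := by
  rw [pickKernel, pickKernel, mul_div_assoc', div_le_div_iff₀ (by positivity) (by positivity)]
  have hts : 0 ≤ t * s := mul_nonneg ht hs
  rcases le_total r 1 with hr1 | hr1
  · rw [max_eq_left hr1]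
    nlinarith [mul_nonneg (mul_nonneg hts hts) (sub_nonneg.2 hr1),
      mul_nonneg hts (sub_nonneg.2 hr1), mul_nonneg hs (sub_nonneg.2 hr1)]
  · rw [max_eq_right hr1]
    nlinarith [mul_nonneg (mul_nonneg (mul_nonneg hts hs) hr) (sub_nonneg.2 hr1),
      mul_nonneg (mul_nonneg hts (mul_nonneg hs hr)) (sub_nonneg.2 hr1)]

lemma integrableOn_pickKernel (ρ : Measure ℝ) [IsFiniteMeasure ρ] {l : ℝ} (hl : 0 ≤ l) :
    IntegrableOn (fun t => pickKernel t l) (Set.Ici 0) ρ := by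
  have hmeas : Measurable fun t => pickKernel t l := by unfold pickKernel; fun_prop
  refine Integrable.mono' (integrable_const (max 1 l)) hmeas.aestronglyMeasurable ?_
  refine (ae_restrict_iff' measurableSet_Ici).2 (.of_forall fun t ht => ?_)
  rw [Real.norm_eq_abs, abs_of_nonneg (pickKernel_nonneg ht hl)]
  exact pickKernel_le_max_one ht hl

/-- `(1 + t l) (l |p|² + t |q|²) - l |p + t q|² = t |q - l p|²`. -/
lemma pickKernel_mul_normSq_add_le {t l : ℝ} (ht : 0 ≤ t) (hl : 0 ≤ l) (p q : ℂ) :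
    pickKernel t l * Complex.normSq (p + t * q)
      ≤ (1 + t) * (l * Complex.normSq p + t * Complex.normSq q) := by
  have hden : 0 < 1 + t * l := by positivity
  rw [pickKernel, div_mul_eq_mul_div, div_le_iff₀ hden]
  simp only [Complex.normSq_apply, Complex.add_re, Complex.add_im, Complex.mul_re, Complex.mul_im,
    Complex.ofReal_re, Complex.ofReal_im, zero_mul, sub_zero, add_zero]
  have h1 : 0 ≤ 1 + t := by linarith
  nlinarith [mul_nonneg (mul_nonneg h1 ht)
    (add_nonneg (sq_nonneg (q.re - l * p.re)) (sq_nonneg (q.im - l * p.im)))]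

def weightedNormSq {ι : Type*} [Fintype ι] (w : ι → ℝ) (x : ι → ℂ) : ℝ :=
  ∑ i, w i * Complex.normSq (x i)

section Weighted

variable {ι : Type*} [Fintype ι]

lemma weightedNormSq_mono {w w' : ι → ℝ} (hw : ∀ i, w i ≤ w' i) (x : ι → ℂ) :
    weightedNormSq w x ≤ weightedNormSq w' x :=
  Finset.sum_le_sum fun i _ => mul_le_mul_of_nonneg_right (hw i) (Complex.normSq_nonneg _)

lemma weightedNormSq_const_mul (a : ℝ) (w : ι → ℝ) (x : ι → ℂ) :
    weightedNormSq (fun i => a * w i) x = a * weightedNormSq w x := by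
  simp only [weightedNormSq, Finset.mul_sum, mul_assoc]

theorem weightedNormSq_pickKernel_mulVec_le {d : ι → ℝ} (hd : ∀ i, 0 ≤ d i)
    {S : Matrix ι ι ℂ} {M₀ r t : ℝ} (hr : 0 ≤ r) (ht : 0 ≤ t)
    (h₀ : ∀ y, weightedNormSq (fun _ => 1) (S *ᵥ y) ≤ M₀ * weightedNormSq (fun _ => 1) y)
    (h₁ : ∀ y, weightedNormSq d (S *ᵥ y) ≤ M₀ * r * weightedNormSq d y) (x : ι → ℂ) :
    weightedNormSq (fun i => pickKernel t (d i)) (S *ᵥ x)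
      ≤ M₀ * weightedNormSq (fun i => pickKernel t (d i * r)) x := by
  have hden : ∀ i, 0 < 1 + t * (d i * r) := fun i => by have := hd i; positivity
  set u : ι → ℂ := fun i => ((1 + t * (d i * r))⁻¹ : ℝ) * x i
  set w : ι → ℂ := fun i => (d i * r / (1 + t * (d i * r)) : ℝ) * x i
  have hsplit : S *ᵥ x = S *ᵥ u + (t : ℂ) • S *ᵥ w := by
    rw [← mulVec_smul, ← mulVec_add]
    congr 1
    funext i
    have hcoef : (1 + t * (d i * r))⁻¹ + t * (d i * r / (1 + t * (d i * r))) = 1 := by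
      rw [mul_div_assoc', inv_eq_one_div, ← add_div, div_eq_one_iff_eq (hden i).ne']
    calc x i = (((1 + t * (d i * r))⁻¹ + t * (d i * r / (1 + t * (d i * r))) : ℝ) : ℂ) * x i := by
          rw [hcoef, Complex.ofReal_one, one_mul]
      _ = (u + (t : ℂ) • w) i := by
          simp only [u, w, Pi.add_apply, Pi.smul_apply, smul_eq_mul]
          push_cast
          ring
  calc weightedNormSq (fun i => pickKernel t (d i)) (S *ᵥ x)
      ≤ ∑ i, (1 + t) * (d i * Complex.normSq ((S *ᵥ u) i)
          + t * Complex.normSq ((S *ᵥ w) i)) := by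
        rw [hsplit]
        exact Finset.sum_le_sum fun i _ => pickKernel_mul_normSq_add_le ht (hd i) _ _
    _ = (1 + t) * (weightedNormSq d (S *ᵥ u) + t * weightedNormSq (fun _ => 1) (S *ᵥ w)) := by
        simp only [weightedNormSq, Finset.mul_sum, ← Finset.sum_add_distrib, one_mul]
    _ ≤ (1 + t) * (M₀ * r * weightedNormSq d u + t * (M₀ * weightedNormSq (fun _ => 1) w)) := by
        gcongr
        exacts [h₁ u, h₀ w]
    _ = M₀ * weightedNormSq (fun i => pickKernel t (d i * r)) x := by
        simp only [weightedNormSq, Finset.mul_sum, ← Finset.sum_add_distrib]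
        refine Finset.sum_congr rfl fun i _ => ?_
        simp only [u, w, pickKernel, Complex.normSq_mul, Complex.normSq_ofReal, one_mul]
        have := hden i
        field_simp

end Weighted

section PickRepresentation

variable {h : ℝ → ℝ} {c : ℝ} {ρ : Measure ℝ} [IsFiniteMeasure ρ]

theorem weightedNormSq_comp_eq_integral {ι : Type*} [Fintype ι]
    (hrep : ∀ l, 0 < l → h l = c + ∫ t in Set.Ici 0, pickKernel t l ∂ρ)
    {d : ι → ℝ} (hd : ∀ i, 0 < d i) (x : ι → ℂ) :
    weightedNormSq (fun i => h (d i)) x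
      = c * weightedNormSq (fun _ => 1) x
        + ∫ t in Set.Ici 0, weightedNormSq (fun i => pickKernel t (d i)) x ∂ρ := by
  simp only [weightedNormSq, one_mul, Finset.mul_sum]
  rw [integral_finsetSum _ fun i _ => (integrableOn_pickKernel ρ (hd i).le).mul_const _,
    ← Finset.sum_add_distrib]
  refine Finset.sum_congr rfl fun i _ => ?_
  rw [hrep (d i) (hd i), integral_mul_const, add_mul]

theorem weightedNormSq_comp_mulVec_le {ι : Type*} [Fintype ι] (hc : 0 ≤ c)
    (hrep : ∀ l, 0 < l → h l = c + ∫ t in Set.Ici 0, pickKernel t l ∂ρ)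
    {d : ι → ℝ} (hd : ∀ i, 0 < d i) {S : Matrix ι ι ℂ} {M₀ r : ℝ} (hr : 0 < r)
    (h₀ : ∀ y, weightedNormSq (fun _ => 1) (S *ᵥ y) ≤ M₀ * weightedNormSq (fun _ => 1) y)
    (h₁ : ∀ y, weightedNormSq d (S *ᵥ y) ≤ M₀ * r * weightedNormSq d y) (x : ι → ℂ) :
    weightedNormSq (fun i => h (d i)) (S *ᵥ x) ≤ M₀ * weightedNormSq (fun i => h (d i * r)) x := by
  have hdr : ∀ i, 0 < d i * r := fun i => mul_pos (hd i) hr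
  have hint : ∀ {e : ι → ℝ}, (∀ i, 0 < e i) → ∀ y : ι → ℂ,
      IntegrableOn (fun t => weightedNormSq (fun i => pickKernel t (e i)) y) (Set.Ici 0) ρ :=
    fun he y => integrable_finsetSum _ fun i _ =>
      (integrableOn_pickKernel ρ (he i).le).mul_const _
  rw [weightedNormSq_comp_eq_integral hrep hd, weightedNormSq_comp_eq_integral hrep hdr,
    mul_add, ← mul_assoc, mul_comm M₀ c, mul_assoc, ← integral_const_mul]
  gcongr ?_ + ?_
  · exact mul_le_mul_of_nonneg_left (h₀ x) hc
  · exact setIntegral_mono_on (hint hd _) ((hint hdr x).const_mul M₀) measurableSet_Ici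
      fun t ht => weightedNormSq_pickKernel_mulVec_le (fun i => (hd i).le) hr.le ht h₀ h₁ x

end PickRepresentation

namespace IsPickPos

variable {h : ℝ → ℝ}

theorem le_max_one_mul (hP : IsPickPos h) {s r : ℝ} (hs : 0 < s) (hr : 0 < r) :
    h (s * r) ≤ max 1 r * h s := by
  obtain ⟨c, hc, ρ, hρ, hrep⟩ := hP
  rw [hrep _ (mul_pos hs hr), hrep s hs, mul_add, ← integral_const_mul]
  refine add_le_add (le_mul_of_one_le_left hc (le_max_left 1 r)) ?_
  exact setIntegral_mono_on (integrableOn_pickKernel ρ (mul_pos hs hr).le)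
    ((integrableOn_pickKernel ρ hs.le).const_mul _) measurableSet_Ici
    fun t ht => pickKernel_mul_le_max_one_mul ht hs.le hr.le

theorem le_sSup_ratio_mul (hP : IsPickPos h) (hpos : ∀ l, 0 < l → 0 < h l) {s r : ℝ}
    (hs : 0 < s) (hr : 0 < r) :
    h (s * r) ≤ sSup {q : ℝ | ∃ s : ℝ, 0 < s ∧ q = h (s * r) / h s} * h s := by
  have hbdd : BddAbove {q : ℝ | ∃ s : ℝ, 0 < s ∧ q = h (s * r) / h s} := by
    refine ⟨max 1 r, ?_⟩
    rintro _ ⟨s, hs, rfl⟩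
    rw [div_le_iff₀ (hpos s hs)]
    exact hP.le_max_one_mul hs hr
  rw [← div_le_iff₀ (hpos s hs)]
  exact le_csSup hbdd ⟨s, hs, rfl⟩

end IsPickPos

namespace Matrix.IsHermitian

variable {n : ℕ} {A : Matrix (Fin n) (Fin n) ℂ}

lemma matFunCalc_eq (hA : A.IsHermitian) (f : ℝ → ℝ) :
    matFunCalc f A = (hA.eigenvectorUnitary : Matrix (Fin n) (Fin n) ℂ) *
      diagonal (fun i => (f (hA.eigenvalues i) : ℂ)) *
      star (hA.eigenvectorUnitary : Matrix (Fin n) (Fin n) ℂ) :=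
  dif_pos hA

lemma matFunCalc_id (hA : A.IsHermitian) : matFunCalc id A = A := by
  conv_rhs => rw [hA.spectral_theorem, Unitary.conjStarAlgAut_apply]
  exact hA.matFunCalc_eq id

lemma matFunCalc_one (hA : A.IsHermitian) : matFunCalc (fun _ => 1) A = 1 := by
  simp [hA.matFunCalc_eq]

lemma isHermitian_matFunCalc (hA : A.IsHermitian) (f : ℝ → ℝ) :
    (matFunCalc f A).IsHermitian := by
  rw [hA.matFunCalc_eq, star_eq_conjTranspose]
  exact isHermitian_mul_mul_conjTranspose _
    (isHermitian_diagonal_of_self_adjoint _ (funext fun i => Complex.conj_ofReal _))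

lemma dotProduct_matFunCalc_mulVec (hA : A.IsHermitian) (f : ℝ → ℝ) (z : Fin n → ℂ) :
    star z ⬝ᵥ (matFunCalc f A *ᵥ z) = weightedNormSq (fun i => f (hA.eigenvalues i))
      (star (hA.eigenvectorUnitary : Matrix (Fin n) (Fin n) ℂ) *ᵥ z) := by
  have hstar : star z ᵥ* (hA.eigenvectorUnitary : Matrix (Fin n) (Fin n) ℂ)
      = star (star (hA.eigenvectorUnitary : Matrix (Fin n) (Fin n) ℂ) *ᵥ z) := by
    rw [star_mulVec, star_eq_conjTranspose, conjTranspose_conjTranspose]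
  rw [hA.matFunCalc_eq, ← mulVec_mulVec, ← mulVec_mulVec, dotProduct_mulVec, hstar]
  simp only [weightedNormSq, dotProduct, mulVec_diagonal, Pi.star_apply, Complex.ofReal_sum]
  refine Finset.sum_congr rfl fun i _ => ?_
  rw [Complex.ofReal_mul, Complex.normSq_eq_conj_mul_self, Complex.star_def]
  ring

theorem loewnerLE_conj_smul_matFunCalc_iff (hA : A.IsHermitian) (f : ℝ → ℝ)
    (T : Matrix (Fin n) (Fin n) ℂ) (K : ℝ) :
    LoewnerLE (Tᴴ * matFunCalc f A * T) (K • matFunCalc f A) ↔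
      ∀ y, weightedNormSq (fun i => f (hA.eigenvalues i))
          ((star (hA.eigenvectorUnitary : Matrix (Fin n) (Fin n) ℂ) * T *
            (hA.eigenvectorUnitary : Matrix (Fin n) (Fin n) ℂ)) *ᵥ y)
        ≤ K * weightedNormSq (fun i => f (hA.eigenvalues i)) y := by
  set U : Matrix (Fin n) (Fin n) ℂ := ↑hA.eigenvectorUnitary
  set F := matFunCalc f A
  have hF : F.IsHermitian := hA.isHermitian_matFunCalc f
  have hquad : ∀ x, star x ⬝ᵥ ((K • F - Tᴴ * F * T) *ᵥ x)
      = ((K * weightedNormSq (fun i => f (hA.eigenvalues i)) (star U *ᵥ x)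
        - weightedNormSq (fun i => f (hA.eigenvalues i)) (star U *ᵥ (T *ᵥ x)) : ℝ) : ℂ) := by
    intro x
    have hconj : star x ⬝ᵥ ((Tᴴ * F * T) *ᵥ x) = star (T *ᵥ x) ⬝ᵥ (F *ᵥ (T *ᵥ x)) := by
      rw [← mulVec_mulVec, ← mulVec_mulVec, dotProduct_mulVec, ← star_mulVec]
    rw [sub_mulVec, dotProduct_sub, hconj, smul_mulVec, dotProduct_smul,
      hA.dotProduct_matFunCalc_mulVec, hA.dotProduct_matFunCalc_mulVec, Complex.real_smul]
    push_cast
    rfl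
  have hherm : (K • F - Tᴴ * F * T).IsHermitian := by
    refine IsHermitian.sub ?_ (isHermitian_conjTranspose_mul_mul T hF)
    rw [IsHermitian, conjTranspose_smul, star_trivial, hF.eq]
  simp only [LoewnerLE, posSemidef_iff_dotProduct_mulVec, hherm, true_and, hquad,
    Complex.zero_le_real, sub_nonneg]
  have hUU : star U * U = 1 := Unitary.coe_star_mul_self _
  have hUU' : U * star U = 1 := Unitary.coe_mul_star_self _
  constructor
  · intro h y
    simpa [mulVec_mulVec, ← mul_assoc, hUU] using h (U *ᵥ y)
  · intro h x
    simpa [mulVec_mulVec, mul_assoc, hUU'] using h (star U *ᵥ x)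

end Matrix.IsHermitian

/-- Theorem 6.3, Fan: a strictly positive `P'` function `h` is of
type `𝐇` where `𝐇(t) = sup_{s>0} h(st)/h(s)`: the conditions `TᴴT ≤ M₀·I` and
`TᴴAT ≤ M₁·A` imply `Tᴴh(A)T ≤ M₀·𝐇(M₁/M₀)·h(A)`. -/
theorem pick_function_is_of_type_H
    (h : ℝ → ℝ) (hP : IsPickPos h) (hpos : ∀ l : ℝ, 0 < l → 0 < h l)
    (n : ℕ) (A : Matrix (Fin n) (Fin n) ℂ) (hA : A.PosDef)
    (T : Matrix (Fin n) (Fin n) ℂ)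
    (M₀ M₁ : ℝ) (hM₀ : 0 < M₀) (hM₁ : 0 < M₁)
    (hT0 : LoewnerLE (Tᴴ * T) (M₀ • (1 : Matrix (Fin n) (Fin n) ℂ)))
    (hT1 : LoewnerLE (Tᴴ * A * T) (M₁ • A)) :
    LoewnerLE (Tᴴ * matFunCalc h A * T)
      ((M₀ * sSup {r : ℝ | ∃ s : ℝ, 0 < s ∧ r = h (s * (M₁ / M₀)) / h s}) •
        matFunCalc h A) := by
  obtain ⟨c, hc, ρ, hρ, hrep⟩ := id hP
  have hr : 0 < M₁ / M₀ := div_pos hM₁ hM₀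
  rw [← Matrix.mul_one Tᴴ, ← hA.1.matFunCalc_one] at hT0
  rw [← hA.1.matFunCalc_id, ← mul_div_cancel₀ M₁ hM₀.ne'] at hT1
  rw [hA.1.loewnerLE_conj_smul_matFunCalc_iff] at hT0 hT1 ⊢
  intro y
  calc _ ≤ M₀ * weightedNormSq (fun i => h (hA.1.eigenvalues i * (M₁ / M₀))) y :=
        weightedNormSq_comp_mulVec_le hc hrep hA.eigenvalues_pos hr hT0 hT1 y
    _ ≤ M₀ * weightedNormSq (fun i => sSup {r : ℝ | ∃ s : ℝ, 0 < s ∧ r = h (s * (M₁ / M₀)) / h s}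
          * h (hA.1.eigenvalues i)) y := by
        gcongr
        exact weightedNormSq_mono (fun i => hP.le_sSup_ratio_mul hpos (hA.eigenvalues_pos i) hr) y
    _ = _ := by rw [weightedNormSq_const_mul, mul_assoc]
end

section
/- Let 𝐇 : (0,∞) → (0,∞) satisfy 𝐇(1) = 1 and 𝐇(t) ≤ max{1, t}, and suppose 𝐇 has left and right derivatives θ₋ = 𝐇′(1−) and θ₊ = 𝐇′(1+) at the point 1 with θ₋ ≤ θ₊. Let h : (0,∞) → (0,∞) be of type 𝐇 in the sense that for every n, every positive definite Hermitian A ∈ Mₙ(ℂ), every T ∈ Mₙ(ℂ), and all M₀, M₁ > 0, the conditions TᴴT ≤ M₀·I and TᴴAT ≤ M₁·A imply Tᴴh(A)T ≤ M₀·𝐇(M₁/M₀)·h(A). Then for every c > 0 and every λ > 0, min{λ^{θ₋}, λ^{θ₊}} ≤ h(cλ)/h(c) ≤ max{λ^{θ₋}, λ^{θ₊}}. In particular, if 𝐇 is differentiable at 1 with 𝐇′(1) = θ, then h(λ) = h(1)·λ^{θ} for all λ > 0. -/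
open Matrix MeasureTheory
open scoped ComplexOrder

/-
Testing the type-𝐇 inequality on `A = diag(a, b)` with the rank-one `T = √b · E₀₁` gives
`h(a) ≤ 𝐇(a/b) · h(b)`. In logarithmic variables `g(x) = log h(eˣ)` and `L(s) = log 𝐇(eˢ)`
this reads `g(x) - g(y) ≤ L(x - y)`, where `L(0) = 0` and `L` has one-sided derivatives
`θ₋, θ₊` at `0`. Cutting `x - y` into `n` equal steps gives
`g(x) - g(y) ≤ n · L((x - y)/n) → θ± · (x - y)`; exchanging `x` and `y` gives the lower bound.
-/

open Real Set Filter Topology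

theorem cfc_diagonal_ofReal {ι 𝕜 : Type*} [Fintype ι] [DecidableEq ι] [RCLike 𝕜]
    (f : ℝ → ℝ) (d : ι → ℝ) :
    cfc f (diagonal fun i => (d i : 𝕜)) = diagonal fun i => (f (d i) : 𝕜) := by
  -- `f` and its Lagrange interpolant at the diagonal entries agree on the spectrum.
  set p := Lagrange.interpolate (Finset.univ.image d) id f
  have hp : ∀ i, p.eval (d i) = f (d i) := fun i =>
    Lagrange.eval_interpolate_at_node f (Set.injOn_id _)
      (Finset.mem_image_of_mem d (Finset.mem_univ i))
  have hspec : spectrum ℝ (diagonal fun i => (d i : 𝕜)) ⊆ Set.range d := by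
    rw [← spectrum.preimage_algebraMap 𝕜, spectrum_diagonal]
    rintro x ⟨i, hi⟩
    exact ⟨i, by simpa using hi⟩
  have hsa : IsSelfAdjoint (diagonal fun i => (d i : 𝕜)) := by
    simp [IsSelfAdjoint, star_eq_conjTranspose, diagonal_conjTranspose, Pi.star_def]
  rw [cfc_congr (g := fun x => p.eval x) fun x hx => ?_, cfc_polynomial p _ hsa,
    ← diagonalAlgHom_apply ℝ, Polynomial.aeval_algHom_apply, Polynomial.aeval_pi_apply]
  · simp [← hp, Polynomial.aeval_algebraMap_apply]
  · obtain ⟨i, rfl⟩ := hspec hx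
    exact (hp i).symm

theorem matFunCalc_eq_cfc {n : ℕ} (f : ℝ → ℝ) {A : Matrix (Fin n) (Fin n) ℂ}
    (hA : A.IsHermitian) :
    matFunCalc f A = cfc f A := by
  rw [matFunCalc, dif_pos hA, hA.cfc_eq, IsHermitian.cfc, Unitary.conjStarAlgAut_apply]
  rfl

theorem matFunCalc_diagonal_ofReal {n : ℕ} (f : ℝ → ℝ) (d : Fin n → ℝ) :
    matFunCalc f (diagonal fun i => (d i : ℂ)) = diagonal fun i => (f (d i) : ℂ) := by
  rw [matFunCalc_eq_cfc f (isHermitian_diagonal_iff.mpr fun i => by simp [IsSelfAdjoint])]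
  exact cfc_diagonal_ofReal f d

theorem loewnerLE_diagonal_ofReal_iff {n : ℕ} {x y : Fin n → ℝ} :
    LoewnerLE (diagonal fun i => (x i : ℂ)) (diagonal fun i => (y i : ℂ)) ↔ x ≤ y := by
  simp [LoewnerLE, diagonal_sub, posSemidef_diagonal_iff, Pi.le_def]

def IsOfType (h H : ℝ → ℝ) : Prop :=
  ∀ n : ℕ, ∀ A : Matrix (Fin n) (Fin n) ℂ, A.PosDef →
      ∀ T : Matrix (Fin n) (Fin n) ℂ, ∀ M₀ M₁ : ℝ, 0 < M₀ → 0 < M₁ →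
        LoewnerLE (Tᴴ * T) (M₀ • (1 : Matrix (Fin n) (Fin n) ℂ)) →
        LoewnerLE (Tᴴ * A * T) (M₁ • A) →
        LoewnerLE (Tᴴ * matFunCalc h A * T) ((M₀ * H (M₁ / M₀)) • matFunCalc h A)

theorem IsOfType.le_mul {h H : ℝ → ℝ} (htype : IsOfType h H) {a b : ℝ} (ha : 0 < a)
    (hb : 0 < b) :
    h a ≤ H (a / b) * h b := by
  let D : (Fin 2 → ℝ) → Matrix (Fin 2) (Fin 2) ℂ := fun x => diagonal fun i => (x i : ℂ)
  let T : Matrix (Fin 2) (Fin 2) ℂ := single 0 1 (√b : ℂ)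
  have hA : (D ![a, b]).PosDef := PosDef.diagonal (by simp [Fin.forall_fin_two, ha, hb])
  have hconj : ∀ x, Tᴴ * D x * T = D ![0, b * x 0] := by
    intro x
    ext i j
    fin_cases i <;> fin_cases j <;>
      simp [D, T, ← Complex.ofReal_mul, mul_right_comm _ (x 0), Real.mul_self_sqrt hb.le]
  have hsmul : ∀ (r : ℝ) x, r • D x = D (r • x) := by
    intro r x
    ext i j
    simp [D, diagonal_apply]
  have hone : (1 : Matrix (Fin 2) (Fin 2) ℂ) = D ![1, 1] := by
    ext i j
    fin_cases i <;> fin_cases j <;> simp [D]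
  have key := htype 2 (D ![a, b]) hA T b a hb ha ?_ ?_
  · rw [matFunCalc_diagonal_ofReal, hconj, hsmul, loewnerLE_diagonal_ofReal_iff] at key
    have hentry : b * h a ≤ b * (H (a / b) * h b) := by simpa [mul_assoc] using key 1
    exact le_of_mul_le_mul_left hentry hb
  · have hTT : Tᴴ * T = D ![0, b] := by simpa [← hone] using hconj ![1, 1]
    rw [hTT, hone, hsmul, loewnerLE_diagonal_ofReal_iff]
    intro i
    fin_cases i <;> simp [hb.le]
  · rw [hconj, hsmul, loewnerLE_diagonal_ofReal_iff]
    intro i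
    fin_cases i <;> simp [mul_comm, mul_self_nonneg]

theorem sub_le_nat_mul_of_sub_le {g L : ℝ → ℝ} (hg : ∀ u v, g u - g v ≤ L (u - v))
    (y δ : ℝ) (n : ℕ) : g (y + n * δ) - g y ≤ n * L δ := by
  induction n with
  | zero => simp
  | succ n ih =>
    have step := hg (y + (n + 1) * δ) (y + n * δ)
    rw [show y + (n + 1) * δ - (y + n * δ) = δ by ring] at step
    push_cast
    linarith

theorem le_mul_of_le_succ_mul_div_succ {L : ℝ → ℝ} {θ t v : ℝ} {s : Set ℝ}
    (hL : HasDerivWithinAt L θ s 0) (hL0 : L 0 = 0) (ht : t ≠ 0)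
    (hts : ∀ n : ℕ, t / (n + 1) ∈ s) (hv : ∀ n : ℕ, v ≤ (n + 1) * L (t / (n + 1))) :
    v ≤ θ * t := by
  have hseq : Tendsto (fun n : ℕ => t / (n + 1)) atTop (𝓝[s \ {0}] 0) := by
    refine tendsto_nhdsWithin_iff.mpr ⟨?_, .of_forall fun n => ⟨hts n, ?_⟩⟩
    · have := tendsto_one_div_add_atTop_nhds_zero_nat.const_mul t
      rw [mul_zero] at this
      exact this.congr fun n => mul_one_div t _
    · exact div_ne_zero ht (by positivity)
  have hlim : Tendsto (fun n : ℕ => (n + 1) * L (t / (n + 1))) atTop (𝓝 (θ * t)) := by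
    refine ((hasDerivWithinAt_iff_tendsto_slope.mp hL).comp hseq |>.mul_const t).congr fun n => ?_
    simp only [Function.comp_apply, slope_def_field, hL0, sub_zero]
    field_simp
  exact ge_of_tendsto hlim (.of_forall hv)

theorem sub_le_max_mul_of_sub_le {g L : ℝ → ℝ} {θm θp : ℝ}
    (hg : ∀ u v, g u - g v ≤ L (u - v)) (hL0 : L 0 = 0)
    (hleft : HasDerivWithinAt L θm (Iic 0) 0) (hright : HasDerivWithinAt L θp (Ici 0) 0)
    (x y : ℝ) : g x - g y ≤ max (θm * (x - y)) (θp * (x - y)) := by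
  have hchain : ∀ n : ℕ, g x - g y ≤ (n + 1) * L ((x - y) / (n + 1)) := fun n => by
    have := sub_le_nat_mul_of_sub_le hg y ((x - y) / (n + 1)) (n + 1)
    push_cast at this
    rwa [mul_div_cancel₀ _ (by positivity), add_sub_cancel] at this
  rcases lt_trichotomy (x - y) 0 with hneg | hzero | hpos
  · exact (le_mul_of_le_succ_mul_div_succ hleft hL0 hneg.ne
      (fun n => div_nonpos_of_nonpos_of_nonneg hneg.le (by positivity)) hchain).trans
      (le_max_left _ _)
  · simp [sub_eq_zero.mp hzero]
  · exact (le_mul_of_le_succ_mul_div_succ hright hL0 hpos.ne'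
      (fun n => (div_pos hpos (by positivity)).le) hchain).trans (le_max_right _ _)

theorem min_mul_le_sub_of_sub_le {g L : ℝ → ℝ} {θm θp : ℝ}
    (hg : ∀ u v, g u - g v ≤ L (u - v)) (hL0 : L 0 = 0)
    (hleft : HasDerivWithinAt L θm (Iic 0) 0) (hright : HasDerivWithinAt L θp (Ici 0) 0)
    (x y : ℝ) : min (θm * (x - y)) (θp * (x - y)) ≤ g x - g y := by
  have := sub_le_max_mul_of_sub_le hg hL0 hleft hright y x
  rw [← neg_sub x y, mul_neg, mul_neg, max_neg_neg] at this
  linarith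

theorem hasDerivWithinAt_log_comp_exp {H : ℝ → ℝ} {θ : ℝ} {s t : Set ℝ}
    (hH : HasDerivWithinAt H θ s 1) (hH1 : H 1 = 1) (hts : MapsTo exp t s) :
    HasDerivWithinAt (fun x => log (H (exp x))) θ t 0 := by
  have hexp : HasDerivWithinAt exp 1 t 0 := by
    simpa using (Real.hasDerivAt_exp 0).hasDerivWithinAt
  have hcomp := (exp_zero ▸ hH).comp (0 : ℝ) hexp hts
  simpa [hH1] using hcomp.log (by simp [hH1])

theorem min_rpow_le_iff_of_pos {θm θp l r : ℝ} (hl : 0 < l) (hr : 0 < r) :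
    min (l ^ θm) (l ^ θp) ≤ r ↔ min (θm * log l) (θp * log l) ≤ log r := by
  rw [le_log_iff_exp_le hr, exp_monotone.map_min, rpow_def_of_pos hl, rpow_def_of_pos hl,
    mul_comm (log l), mul_comm (log l)]

theorem le_max_rpow_iff_of_pos {θm θp l r : ℝ} (hl : 0 < l) (hr : 0 < r) :
    r ≤ max (l ^ θm) (l ^ θp) ↔ log r ≤ max (θm * log l) (θp * log l) := by
  rw [log_le_iff_le_exp hr, exp_monotone.map_max, rpow_def_of_pos hl, rpow_def_of_pos hl,
    mul_comm (log l), mul_comm (log l)]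

theorem IsOfType.log_sub_log_le {h H : ℝ → ℝ} (htype : IsOfType h H)
    (hpos : ∀ l : ℝ, 0 < l → 0 < h l) (u v : ℝ) :
    log (h (exp u)) - log (h (exp v)) ≤ log (H (exp (u - v))) := by
  have hu := hpos _ (exp_pos u)
  have hv := hpos _ (exp_pos v)
  have key := htype.le_mul (exp_pos u) (exp_pos v)
  rw [← exp_sub] at key
  have hH : 0 < H (exp (u - v)) := pos_of_mul_pos_left (hu.trans_le key) hv.le
  rw [sub_le_iff_le_add, ← log_mul hH.ne' hv.ne']
  exact log_le_log hu key

theorem IsOfType.div_mem_Icc_min_max_rpow {h H : ℝ → ℝ} {θm θp : ℝ} (htype : IsOfType h H)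
    (hpos : ∀ l : ℝ, 0 < l → 0 < h l) (Hone : H 1 = 1)
    (Hleft : HasDerivWithinAt H θm (Iic 1) 1) (Hright : HasDerivWithinAt H θp (Ici 1) 1)
    {c l : ℝ} (hc : 0 < c) (hl : 0 < l) :
    h (c * l) / h c ∈ Icc (min (l ^ θm) (l ^ θp)) (max (l ^ θm) (l ^ θp)) := by
  have hg := htype.log_sub_log_le hpos
  have hL0 : log (H (exp 0)) = 0 := by simp [Hone]
  have hleft := hasDerivWithinAt_log_comp_exp Hleft Hone fun _ hx => exp_le_one_iff.mpr hx
  have hright := hasDerivWithinAt_log_comp_exp Hright Hone fun _ hx => one_le_exp hx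
  have hratio := div_pos (hpos _ (mul_pos hc hl)) (hpos _ hc)
  have hlog : log (h (c * l) / h c)
      = log (h (exp (log c + log l))) - log (h (exp (log c))) := by
    rw [← log_mul hc.ne' hl.ne', exp_log hc, exp_log (mul_pos hc hl),
      log_div (hpos _ (mul_pos hc hl)).ne' (hpos _ hc).ne']
  have hδ : log c + log l - log c = log l := by ring
  have lower := min_mul_le_sub_of_sub_le hg hL0 hleft hright (log c + log l) (log c)
  have upper := sub_le_max_mul_of_sub_le hg hL0 hleft hright (log c + log l) (log c)
  rw [hδ, ← hlog] at lower upper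
  rw [mem_Icc, min_rpow_le_iff_of_pos hl hratio, le_max_rpow_iff_of_pos hl hratio]
  exact ⟨lower, upper⟩

theorem type_H_power_bounds_general (H : ℝ → ℝ) (θm θp : ℝ)
    (Hone : H 1 = 1)
    (Hleft : HasDerivWithinAt H θm (Set.Iic 1) 1)
    (Hright : HasDerivWithinAt H θp (Set.Ici 1) 1)
    (h : ℝ → ℝ) (hpos : ∀ l : ℝ, 0 < l → 0 < h l)
    (htype : ∀ n : ℕ, ∀ A : Matrix (Fin n) (Fin n) ℂ, A.PosDef →
      ∀ T : Matrix (Fin n) (Fin n) ℂ, ∀ M₀ M₁ : ℝ, 0 < M₀ → 0 < M₁ →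
        LoewnerLE (Tᴴ * T) (M₀ • (1 : Matrix (Fin n) (Fin n) ℂ)) →
        LoewnerLE (Tᴴ * A * T) (M₁ • A) →
        LoewnerLE (Tᴴ * matFunCalc h A * T) ((M₀ * H (M₁ / M₀)) • matFunCalc h A)) :
    (∀ c : ℝ, 0 < c → ∀ l : ℝ, 0 < l →
      min (l ^ θm) (l ^ θp) ≤ h (c * l) / h c ∧
        h (c * l) / h c ≤ max (l ^ θm) (l ^ θp)) ∧
    (θm = θp → ∀ l : ℝ, 0 < l → h l = h 1 * l ^ θm) := by
  have ratio_bounds := fun c (hc : 0 < c) l (hl : 0 < l) =>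
    IsOfType.div_mem_Icc_min_max_rpow htype hpos Hone Hleft Hright hc hl
  refine ⟨ratio_bounds, fun hθ l hl => ?_⟩
  subst hθ
  obtain ⟨lower, upper⟩ := ratio_bounds 1 one_pos l hl
  simp only [min_self, max_self, one_mul] at lower upper
  rw [mul_comm, ← div_eq_iff (hpos 1 one_pos).ne']
  exact le_antisymm upper lower

/-- Theorem 6.2: if `𝐇(1) = 1`, `𝐇(t) ≤ max{1,t}`, and `𝐇` has
left and right derivatives `θ₋ ≤ θ₊` at `1`, then any positive function `h` of
type `𝐇` satisfies `min{λ^θ₋, λ^θ₊} ≤ h(cλ)/h(c) ≤ max{λ^θ₋, λ^θ₊}`; in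
particular, if `θ₋ = θ₊ = θ` then `h(λ) = h(1)·λ^θ`. -/
theorem type_H_power_bounds (H : ℝ → ℝ) (θm θp : ℝ)
    (Hone : H 1 = 1) (Hbound : ∀ t : ℝ, 0 < t → H t ≤ max 1 t)
    (Hleft : HasDerivWithinAt H θm (Set.Iic 1) 1)
    (Hright : HasDerivWithinAt H θp (Set.Ici 1) 1)
    (hθ : θm ≤ θp)
    (h : ℝ → ℝ) (hpos : ∀ l : ℝ, 0 < l → 0 < h l)
    (htype : ∀ n : ℕ, ∀ A : Matrix (Fin n) (Fin n) ℂ, A.PosDef →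
      ∀ T : Matrix (Fin n) (Fin n) ℂ, ∀ M₀ M₁ : ℝ, 0 < M₀ → 0 < M₁ →
        LoewnerLE (Tᴴ * T) (M₀ • (1 : Matrix (Fin n) (Fin n) ℂ)) →
        LoewnerLE (Tᴴ * A * T) (M₁ • A) →
        LoewnerLE (Tᴴ * matFunCalc h A * T) ((M₀ * H (M₁ / M₀)) • matFunCalc h A)) :
    (∀ c : ℝ, 0 < c → ∀ l : ℝ, 0 < l →
      min (l ^ θm) (l ^ θp) ≤ h (c * l) / h c ∧
        h (c * l) / h c ≤ max (l ^ θm) (l ^ θp)) ∧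
    (θm = θp → ∀ l : ℝ, 0 < l → h l = h 1 * l ^ θm) :=
  type_H_power_bounds_general H θm θp Hone Hleft Hright h hpos htype
end
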